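/- Let G be a finite p-group for a prime p. Then κ(P(G)) = δ(P(G)) if and only if either (i) G is cyclic, or (ii) G is a noncyclic 2-group containing a maximal cyclic subgroup of order 2. -/

import Mathlib

/-- The power graph of a group: distinct `x` and `y` are adjacent iff one is a
positive power of the other. -/
def powerGraph (G : Type*) [Group G] : SimpleGraph G where
  Adj x y := x ≠ y ∧ ((∃ k : ℕ, 0 < k ∧ x = y ^ k) ∨ (∃ k : ℕ, 0 < k ∧ y = x ^ k))
  symm := by
    constructor
    intro x y h
    exact ⟨h.1.symm, h.2.symm⟩
  loopless := by
    constructor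
    intro x h
    exact h.1 rfl

noncomputable instance powerGraphDecidableAdj (G : Type*) [Group G] :
    DecidableRel (powerGraph G).Adj :=
  Classical.decRel _

/-- The vertex connectivity of a finite graph: the minimum number of vertices whose
deletion yields a disconnected graph or a graph with exactly one vertex. -/
noncomputable def vertexConnectivity {V : Type*} [Fintype V] (Γ : SimpleGraph V) : ℕ :=
  sInf {n | ∃ S : Finset V, S.card = n ∧
    (¬ (SimpleGraph.induce ((↑S : Set V)ᶜ) Γ).Preconnected ∨ ((↑S : Set V)ᶜ).ncard = 1)}

/-- A subgroup is a maximal cyclic subgroup if it is cyclic and not properly contained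
in any cyclic subgroup. -/
def IsMaximalCyclic {G : Type*} [Group G] (M : Subgroup G) : Prop :=
  IsCyclic ↥M ∧ ∀ N : Subgroup G, IsCyclic ↥N → M ≤ N → M = N

/-- `K` is a maximal cyclic subgroup of the subgroup `H`. -/
def IsMaximalCyclicIn {G : Type*} [Group G] (H K : Subgroup G) : Prop :=
  IsCyclic ↥K ∧ K ≤ H ∧ ∀ N : Subgroup G, IsCyclic ↥N → N ≤ H → K ≤ N → K = N

/-- A generalized quaternion group: a dicyclic group `Q_{4n}` with `n ≥ 2` a power of 2. -/
def IsGeneralizedQuaternion (G : Type*) [Group G] : Prop :=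
  ∃ n : ℕ, 2 ≤ n ∧ (∃ k : ℕ, n = 2 ^ k) ∧ Nonempty (G ≃* QuaternionGroup n)


/-!
In a `p`-group the cyclic subgroups of a cyclic subgroup form a chain, so every element is
adjacent to all of any cyclic subgroup containing it. Every element lies in a maximal cyclic
subgroup, hence `δ = m - 1` where `m` is the least order of a maximal cyclic subgroup `⟨g⟩`.
A generator of a maximal cyclic subgroup `⟨g⟩` is adjacent only to elements of `⟨g⟩`, so if
`G` is not cyclic, deleting the `m - φ m` non-generators of `⟨g⟩` separates its generators
from the rest of `G`, and `κ ≤ m - φ m`. Thus `κ = δ` forces `φ m = 1`, i.e. `m = 2` and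
`p = 2`. Conversely, a generator of a maximal cyclic subgroup of order `2` has `1` as its only
neighbour, and `1` is adjacent to everything, so `κ = δ = 1`. A cyclic `p`-group has a complete
power graph, for which `κ = δ = |G| - 1`.
-/

open Subgroup SimpleGraph
open scoped Finset Nat

lemma ncard_compl_coe_univ_erase {V : Type*} [Fintype V] [DecidableEq V] (v : V) :
    ((↑(Finset.univ.erase v) : Set V)ᶜ).ncard = 1 := by
  rw [Finset.coe_erase, Finset.coe_univ, Set.compl_sdiff, Set.compl_univ, Set.union_empty,
    Set.ncard_singleton]

namespace SimpleGraph

lemma degree_eq_ncard_neighborSet {V : Type*} (Γ : SimpleGraph V) (v : V)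
    [Fintype (Γ.neighborSet v)] : Γ.degree v = (Γ.neighborSet v).ncard := by
  rw [← coe_neighborFinset, Set.ncard_coe_finset, card_neighborFinset_eq_degree]

variable {V : Type*} [Fintype V] {Γ : SimpleGraph V}

lemma vertexConnectivity_le_card {S : Finset V}
    (hS : ¬ (Γ.induce (↑S : Set V)ᶜ).Preconnected ∨ ((↑S : Set V)ᶜ).ncard = 1) :
    vertexConnectivity Γ ≤ S.card :=
  Nat.sInf_le ⟨S, rfl, hS⟩

lemma le_vertexConnectivity [Nonempty V] {k : ℕ}
    (h : ∀ S : Finset V,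
      ¬ (Γ.induce (↑S : Set V)ᶜ).Preconnected ∨ ((↑S : Set V)ᶜ).ncard = 1 → k ≤ S.card) :
    k ≤ vertexConnectivity Γ := by
  classical
  obtain ⟨v⟩ := ‹Nonempty V›
  exact le_csInf ⟨_, _, rfl, Or.inr (ncard_compl_coe_univ_erase v)⟩
    fun n ⟨S, hSn, hS⟩ => hSn ▸ h S hS

lemma vertexConnectivity_le_card_of_separates (S : Finset V) {A : Set V} {a b : V}
    (ha : a ∈ A) (haS : a ∉ S) (hb : b ∉ A) (hbS : b ∉ S)
    (hA : ∀ u v, u ∈ A → Γ.Adj u v → v ∉ S → v ∈ A) :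
    vertexConnectivity Γ ≤ S.card := by
  refine vertexConnectivity_le_card (Or.inl fun hconn => hb ?_)
  have walk_mem : ∀ {u v : ↥(↑S : Set V)ᶜ}, (Γ.induce (↑S : Set V)ᶜ).Walk u v →
      ↑u ∈ A → ↑v ∈ A := by
    intro u v w
    induction w with
    | nil => exact id
    | @cons _ v' _ huv _ ih => exact fun hu => ih (hA _ _ hu huv v'.2)
  obtain ⟨w⟩ := hconn ⟨a, haS⟩ ⟨b, hbS⟩
  exact walk_mem w ha

lemma vertexConnectivity_pos [Nontrivial V] (hΓ : Γ.Preconnected) :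
    0 < vertexConnectivity Γ := by
  refine le_vertexConnectivity fun S hS => Finset.card_pos.mpr ?_
  rw [Finset.nonempty_iff_ne_empty]
  rintro rfl
  rw [Finset.coe_empty, Set.compl_empty, Set.ncard_univ, Nat.card_eq_fintype_card] at hS
  rcases hS with hS | hS
  · exact hS (Γ.induceUnivIso.symm.preconnected_iff.mp hΓ)
  · exact Fintype.one_lt_card.ne' hS

lemma vertexConnectivity_top [Nonempty V] :
    vertexConnectivity (⊤ : SimpleGraph V) = Fintype.card V - 1 := by
  classical
  obtain ⟨v⟩ := ‹Nonempty V›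
  refine le_antisymm ?_ (le_vertexConnectivity fun S hS => ?_)
  · simpa using vertexConnectivity_le_card (Γ := ⊤) (S := Finset.univ.erase v)
      (Or.inr (ncard_compl_coe_univ_erase v))
  · rcases hS with hS | hS
    · exact absurd (by simp) hS
    · have := Set.ncard_add_ncard_compl (↑S : Set V)
      rw [hS, Set.ncard_coe_finset, Nat.card_eq_fintype_card] at this
      omega

end SimpleGraph

section CyclicSubgroups

variable {G : Type*} [Group G]

lemma ncard_zpowers (g : G) : (zpowers g : Set G).ncard = orderOf g :=
  (Nat.card_coe_set_eq _).symm.trans (Nat.card_zpowers g)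

lemma exists_pos_pow_eq_of_mem_zpowers [Finite G] {x y : G} (h : x ∈ zpowers y) :
    ∃ k : ℕ, 0 < k ∧ x = y ^ k := by
  obtain ⟨k, rfl⟩ := mem_powers_iff_mem_zpowers.mpr h
  exact ⟨k + orderOf y, by have := orderOf_pos y; omega, by
    rw [pow_add, pow_orderOf_eq_one, mul_one]⟩

lemma zpowers_eq_zpowers_of_mem_of_orderOf_eq [Finite G] {g y : G} (hy : y ∈ zpowers g)
    (hord : orderOf y = orderOf g) : zpowers y = zpowers g :=
  eq_of_le_of_card_ge (zpowers_le.mpr hy) (by rw [Nat.card_zpowers, Nat.card_zpowers, hord])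

lemma pow_gcd_orderOf_mem_zpowers_pow (g : G) (b : ℕ) :
    g ^ Nat.gcd b (orderOf g) ∈ zpowers (g ^ b) := by
  refine ⟨Nat.gcdA b (orderOf g), ?_⟩
  change (g ^ b) ^ Nat.gcdA b (orderOf g) = g ^ Nat.gcd b (orderOf g)
  rw [← zpow_natCast g (Nat.gcd _ _), Nat.gcd_eq_gcd_ab, zpow_add, zpow_mul, zpow_mul,
    zpow_natCast, zpow_natCast, pow_orderOf_eq_one, one_zpow, mul_one]

lemma pow_mem_zpowers_pow_of_gcd_dvd {g : G} {a b : ℕ}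
    (h : Nat.gcd b (orderOf g) ∣ Nat.gcd a (orderOf g)) : g ^ a ∈ zpowers (g ^ b) := by
  obtain ⟨c, hc⟩ := h.trans (Nat.gcd_dvd_left a (orderOf g))
  rw [hc, pow_mul]
  exact pow_mem (pow_gcd_orderOf_mem_zpowers_pow g b) c

lemma IsPGroup.mem_zpowers_or_mem_zpowers [Finite G] {p : ℕ} (hp : p.Prime)
    (hpg : IsPGroup p G) {g x y : G} (hx : x ∈ zpowers g) (hy : y ∈ zpowers g) :
    x ∈ zpowers y ∨ y ∈ zpowers x := by
  have : Fact p.Prime := ⟨hp⟩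
  obtain ⟨n, hn⟩ := IsPGroup.iff_orderOf.mp hpg g
  obtain ⟨a, -, rfl⟩ := exists_pos_pow_eq_of_mem_zpowers hx
  obtain ⟨b, -, rfl⟩ := exists_pos_pow_eq_of_mem_zpowers hy
  obtain ⟨i, -, hi⟩ := (Nat.dvd_prime_pow hp).mp (hn ▸ Nat.gcd_dvd_right a (orderOf g))
  obtain ⟨j, -, hj⟩ := (Nat.dvd_prime_pow hp).mp (hn ▸ Nat.gcd_dvd_right b (orderOf g))
  rcases le_total i j with hij | hji
  · exact Or.inr (pow_mem_zpowers_pow_of_gcd_dvd (by rw [hn, hi, hj]; exact pow_dvd_pow p hij))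
  · exact Or.inl (pow_mem_zpowers_pow_of_gcd_dvd (by rw [hn, hi, hj]; exact pow_dvd_pow p hji))

lemma IsPGroup.eq_of_orderOf_eq_prime {p q : ℕ} (hp : p.Prime) (hq : q.Prime)
    (hpg : IsPGroup p G) {g : G} (hg : orderOf g = q) : p = q := by
  have : Fact p.Prime := ⟨hp⟩
  obtain ⟨k, hk⟩ := IsPGroup.iff_orderOf.mp hpg g
  exact (hq.pow_eq_iff.mp (hk ▸ hg)).1

lemma card_filter_mem_zpowers_orderOf_eq [Fintype G] [DecidableEq G] (g : G) :
    #{y | y ∈ zpowers g ∧ orderOf y = orderOf g} = φ (orderOf g) := by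
  classical
  rw [← IsCyclic.card_orderOf_eq_totient (α := zpowers g) Fintype.card_zpowers.symm.dvd]
  refine Finset.card_bij' (fun y hy => ⟨y, (Finset.mem_filter.mp hy).2.1⟩) (fun a _ => a)
    (fun y hy => ?_) (fun a ha => ?_) (fun _ _ => rfl) (fun _ _ => rfl)
  · simpa [orderOf_mk] using (Finset.mem_filter.mp hy).2.2
  · simpa [Subgroup.orderOf_coe] using (Finset.mem_filter.mp ha).2

lemma card_filter_mem_zpowers_orderOf_ne [Fintype G] [DecidableEq G] (g : G) :
    #{y | y ∈ zpowers g ∧ orderOf y ≠ orderOf g} = orderOf g - φ (orderOf g) := by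
  have hsplit := Finset.card_filter_add_card_filter_not (s := ({y | y ∈ zpowers g} : Finset G))
    (fun y => orderOf y = orderOf g)
  have hall : #({y | y ∈ zpowers g} : Finset G) = orderOf g := by
    rw [← ncard_zpowers, ← Set.ncard_coe_finset]
    congr 1
    ext
    simp
  simp only [Finset.filter_filter, ← ne_eq] at hsplit
  rw [card_filter_mem_zpowers_orderOf_eq, hall] at hsplit
  omega

lemma exists_mem_zpowers_isMaximalCyclic [Finite G] (x : G) :
    ∃ g : G, x ∈ zpowers g ∧ IsMaximalCyclic (zpowers g) := by
  obtain ⟨g, hxg, hmax⟩ := Set.exists_max_image {g : G | x ∈ zpowers g} orderOf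
    (Set.toFinite _) ⟨x, mem_zpowers x⟩
  refine ⟨g, hxg, inferInstance, fun N hN hle => ?_⟩
  obtain ⟨h, rfl⟩ := N.isCyclic_iff_exists_zpowers_eq_top.mp hN
  refine eq_of_le_of_card_ge hle ?_
  rw [Nat.card_zpowers, Nat.card_zpowers]
  exact hmax h (hle hxg)

lemma exists_isMaximalCyclic_zpowers_orderOf_le [Finite G] :
    ∃ g : G, IsMaximalCyclic (zpowers g) ∧
      ∀ h : G, IsMaximalCyclic (zpowers h) → orderOf g ≤ orderOf h := by
  obtain ⟨g, -, hg⟩ := exists_mem_zpowers_isMaximalCyclic (1 : G)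
  exact Set.exists_min_image {g : G | IsMaximalCyclic (zpowers g)} orderOf (Set.toFinite _)
    ⟨g, hg⟩

end CyclicSubgroups

section PowerGraph

variable {G : Type*} [Group G]

lemma powerGraph_adj_iff [Finite G] {x y : G} :
    (powerGraph G).Adj x y ↔ x ≠ y ∧ (x ∈ zpowers y ∨ y ∈ zpowers x) := by
  refine and_congr_right fun _ => or_congr ?_ ?_ <;>
    exact ⟨fun ⟨k, _, h⟩ => h ▸ pow_mem (mem_zpowers _) k, exists_pos_pow_eq_of_mem_zpowers⟩

lemma powerGraph_adj_one [Finite G] {x : G} (hx : x ≠ 1) : (powerGraph G).Adj 1 x :=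
  powerGraph_adj_iff.mpr ⟨hx.symm, Or.inl (one_mem _)⟩

lemma powerGraph_preconnected [Finite G] : (powerGraph G).Preconnected := by
  have h : ∀ x : G, (powerGraph G).Reachable 1 x := fun x => by
    rcases eq_or_ne x 1 with rfl | hx
    · rfl
    · exact (powerGraph_adj_one hx).reachable
  exact fun x y => (h x).symm.trans (h y)

lemma mem_zpowers_of_powerGraph_adj {g w : G} (hg : IsMaximalCyclic (zpowers g))
    (h : (powerGraph G).Adj g w) : w ∈ zpowers g := by
  rcases h.2 with ⟨k, -, hk⟩ | ⟨k, -, rfl⟩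
  · rw [hg.2 _ inferInstance (zpowers_le.mpr (hk ▸ pow_mem (mem_zpowers w) k))]
    exact mem_zpowers w
  · exact pow_mem (mem_zpowers g) k

lemma IsPGroup.powerGraph_eq_top_of_isCyclic [Finite G] [IsCyclic G] {p : ℕ} (hp : p.Prime)
    (hpg : IsPGroup p G) : powerGraph G = ⊤ := by
  obtain ⟨g, hg⟩ := IsCyclic.exists_generator (α := G)
  ext x y
  exact powerGraph_adj_iff.trans
    (and_iff_left (hpg.mem_zpowers_or_mem_zpowers hp (hg x) (hg y)))

variable [Fintype G]

lemma IsPGroup.orderOf_sub_one_le_degree_powerGraph {p : ℕ} (hp : p.Prime)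
    (hpg : IsPGroup p G) {g v : G} (hv : v ∈ zpowers g) :
    orderOf g - 1 ≤ (powerGraph G).degree v := by
  rw [degree_eq_ncard_neighborSet, ← ncard_zpowers, ← Set.ncard_sdiff_singleton_of_mem hv]
  exact Set.ncard_le_ncard fun u ⟨hu, huv⟩ =>
    powerGraph_adj_iff.mpr ⟨Ne.symm huv, hpg.mem_zpowers_or_mem_zpowers hp hv hu⟩

lemma degree_powerGraph_of_isMaximalCyclic {g : G} (hg : IsMaximalCyclic (zpowers g)) :
    (powerGraph G).degree g = orderOf g - 1 := by
  rw [degree_eq_ncard_neighborSet, ← ncard_zpowers,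
    ← Set.ncard_sdiff_singleton_of_mem (mem_zpowers g)]
  congr 1
  ext w
  rw [mem_neighborSet]
  exact ⟨fun h => ⟨mem_zpowers_of_powerGraph_adj hg h, h.ne'⟩,
    fun ⟨hw, hwg⟩ => powerGraph_adj_iff.mpr ⟨Ne.symm hwg, Or.inr hw⟩⟩

lemma IsPGroup.minDegree_powerGraph {p : ℕ} (hp : p.Prime) (hpg : IsPGroup p G) {g : G}
    (hg : IsMaximalCyclic (zpowers g))
    (hmin : ∀ h : G, IsMaximalCyclic (zpowers h) → orderOf g ≤ orderOf h) :
    (powerGraph G).minDegree = orderOf g - 1 := by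
  refine le_antisymm (degree_powerGraph_of_isMaximalCyclic hg ▸ minDegree_le_degree _ g) ?_
  obtain ⟨v, hv⟩ := (powerGraph G).exists_minimal_degree_vertex
  obtain ⟨h, hvh, hh⟩ := exists_mem_zpowers_isMaximalCyclic v
  rw [hv]
  exact (Nat.sub_le_sub_right (hmin h hh) 1).trans
    (hpg.orderOf_sub_one_le_degree_powerGraph hp hvh)

lemma vertexConnectivity_powerGraph_le {g : G} (hg : IsMaximalCyclic (zpowers g))
    (hG : ¬ IsCyclic G) : vertexConnectivity (powerGraph G) ≤ orderOf g - φ (orderOf g) := by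
  classical
  obtain ⟨b, hb⟩ : ∃ b, b ∉ zpowers g := by
    by_contra! h
    exact hG ⟨g, h⟩
  set generators : Set G := {y | y ∈ zpowers g ∧ orderOf y = orderOf g}
  set nongenerators : Finset G := {y | y ∈ zpowers g ∧ orderOf y ≠ orderOf g}
  refine (vertexConnectivity_le_card_of_separates nongenerators (A := generators) (a := g)
    (b := b) ⟨mem_zpowers g, rfl⟩ (by simp [nongenerators]) (fun h => hb h.1)
    (by simp [nongenerators, hb]) ?_).trans_eq (card_filter_mem_zpowers_orderOf_ne g)
  rintro u v ⟨hu, hug⟩ huv hv_not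
  have hzu := zpowers_eq_zpowers_of_mem_of_orderOf_eq hu hug
  have hv : v ∈ zpowers g := hzu ▸ mem_zpowers_of_powerGraph_adj (hzu ▸ hg) huv
  exact ⟨hv, by simpa [nongenerators, hv] using hv_not⟩

end PowerGraph

theorem power_graph_kappa_eq_delta_iff_p_group
    {G : Type*} [Group G] [Fintype G] (p : ℕ) (hp : p.Prime) (hpg : IsPGroup p G) :
    vertexConnectivity (powerGraph G) = (powerGraph G).minDegree ↔
      (IsCyclic G ∨
        (¬ IsCyclic G ∧ IsPGroup 2 G ∧
          ∃ x : G, IsMaximalCyclic (Subgroup.zpowers x) ∧ orderOf x = 2)) := by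
  by_cases hcyc : IsCyclic G
  · classical
    simp [hcyc, hpg.powerGraph_eq_top_of_isCyclic hp, vertexConnectivity_top]
  have : Nontrivial G := Nontrivial.of_not_isCyclic hcyc
  have hδ_pos := (powerGraph_preconnected (G := G)).minDegree_pos_of_nontrivial
  simp only [hcyc, false_or, not_false_eq_true, true_and]
  constructor
  · intro h
    obtain ⟨g, hg, hmin⟩ := exists_isMaximalCyclic_zpowers_orderOf_le (G := G)
    have hδ := hpg.minDegree_powerGraph hp hg hmin
    have hκ := vertexConnectivity_powerGraph_le hg hcyc
    have hφ : φ (orderOf g) = 1 := by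
      have := Nat.totient_pos.mpr (orderOf_pos g)
      omega
    have hg2 : orderOf g = 2 := (Nat.totient_eq_one_iff.mp hφ).resolve_left (by omega)
    obtain rfl := hpg.eq_of_orderOf_eq_prime hp Nat.prime_two hg2
    exact ⟨hpg, g, hg, hg2⟩
  · rintro ⟨-, x, hx, hx2⟩
    have hκ_pos := vertexConnectivity_pos (powerGraph_preconnected (G := G))
    have hδ := minDegree_le_degree (powerGraph G) x
    have hκ := vertexConnectivity_powerGraph_le hx hcyc
    rw [degree_powerGraph_of_isMaximalCyclic hx, hx2] at hδ
    rw [hx2, Nat.totient_two] at hκ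
    omega
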